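/- arXiv:1903.02813 — 2 statements merged into one kernel-verified Lean document; each statement's English description precedes it below -/
import Mathlib

section
/- For all real intervals J₁ and J₂ whose closures are disjoint, the operators on the Fock space 𝓕 satisfy E_{J₁} ∘ E_{J₂} = E_{J₂} ∘ E_{J₁} and F_{J₁} ∘ F_{J₂} = F_{J₂} ∘ F_{J₁} as K-linear endomorphisms of 𝓕. -/
/-! Both operators send a basis vector `|p⟩` to a multiple of `|p ∓ 1_J⟩` or to `0`. When the
closures of `J₁` and `J₂` are disjoint there is a gap between them, and `p ∓ 1_{J₁}` coincides with
`p ∓ 1_{J₁} ∓ 1_{J₂}` on one side of the gap and with `p` on the other. Since being a pyramid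
can be checked by gluing two pyramids along an overlap, the two-step moves are possible in one
order exactly when they are possible in the other; they end at the same pyramid, and the weights
agree because the endpoints of each interval lie outside the other one. -/

noncomputable section
open Function
open scoped Classical

/-- The `ℕ`-valued indicator function of the interval `[a, b)`. -/
def ind (a b : ℝ) : ℝ → ℕ := (Set.Ico a b).indicator fun _ => 1

/-- A real pyramid: a function `p : ℝ → ℕ` vanishing outside a bounded set, maximal at `0`,
nondecreasing on `(-∞, 0]`, nonincreasing on `[0, ∞)`, right-continuous and piecewise
constant with finitely many discontinuities, and with jumps of size at most 1
(`p₋(x)` is the left limit of `p` at `x`). -/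
def IsRealPyramid (p : ℝ → ℕ) : Prop :=
  (∃ M : ℝ, ∀ x : ℝ, M ≤ |x| → p x = 0) ∧
  (∀ x, p x ≤ p 0) ∧
  (∀ ⦃x y : ℝ⦄, x ≤ y → y ≤ 0 → p x ≤ p y) ∧
  (∀ ⦃x y : ℝ⦄, 0 ≤ x → x ≤ y → p y ≤ p x) ∧
  (∀ x, ContinuousWithinAt p (Set.Ici x) x) ∧
  {x : ℝ | ¬ ContinuousAt p x}.Finite ∧
  (∀ x, |(p x : ℤ) - ((Function.leftLim p x : ℕ) : ℤ)| ≤ 1)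

/-- The interval `[a, b)` is addable for `p` if `p + 1_{[a,b)}` is again a real pyramid. -/
def Addable (p : ℝ → ℕ) (a b : ℝ) : Prop := IsRealPyramid (fun x => p x + ind a b x)

/-- The interval `[a, b)` is removable for `p` if `p ≥ 1` on `[a, b)` and `p − 1_{[a,b)}`
is again a real pyramid. -/
def Removable (p : ℝ → ℕ) (a b : ℝ) : Prop :=
  (∀ x ∈ Set.Ico a b, 1 ≤ p x) ∧ IsRealPyramid (fun x => p x - ind a b x)

/-- `n_J(p)`: `1` if `J = [a,b)` is addable for `p`, `−1` if removable, `0` otherwise. -/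
def nJ (p : ℝ → ℕ) (a b : ℝ) : ℤ :=
  if Addable p a b then 1 else if Removable p a b then -1 else 0

/-- The base field `K = ℚ(t)`. -/
abbrev K : Type := RatFunc ℚ

/-- The variable `t ∈ K` (playing the role of `υ^{1/2}`). -/
def tK : K := RatFunc.X

/-- The quantum parameter `v := t²`. -/
def vK : K := tK ^ 2

/-- The type of real pyramids. -/
def Pyr : Type := {p : ℝ → ℕ // IsRealPyramid p}

/-- The Fock space: the `K`-vector space with basis `|p⟩` indexed by real pyramids. -/
abbrev Fock : Type := Pyr →₀ K

/-- `E_J |p⟩ = −t·(−v)^{p(b)−p(a)} |p − 1_J⟩` if `J = [a,b)` is removable for `p`,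
and `0` otherwise. -/
def Evec (a b : ℝ) (p : Pyr) : Fock :=
  if h : Removable p.1 a b then
    Finsupp.single ⟨fun x => p.1 x - ind a b x, h.2⟩
      (-tK * (-vK) ^ ((p.1 b : ℤ) - (p.1 a : ℤ)))
  else 0

/-- `F_J |p⟩ = t·(−v)^{p(a)−p(b)} |p + 1_J⟩` if `J = [a,b)` is addable for `p`,
and `0` otherwise. -/
def Fvec (a b : ℝ) (p : Pyr) : Fock :=
  if h : Addable p.1 a b then
    Finsupp.single ⟨fun x => p.1 x + ind a b x, h⟩
      (tK * (-vK) ^ ((p.1 a : ℤ) - (p.1 b : ℤ)))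
  else 0

/-- The `K`-linear operator `E_J` on the Fock space. -/
def Eop (a b : ℝ) : Fock →ₗ[K] Fock :=
  Finsupp.lsum K fun p => LinearMap.toSpanSingleton K Fock (Evec a b p)

/-- The `K`-linear operator `F_J` on the Fock space. -/
def Fop (a b : ℝ) : Fock →ₗ[K] Fock :=
  Finsupp.lsum K fun p => LinearMap.toSpanSingleton K Fock (Fvec a b p)

/-- The `K`-linear operator `K_J` on the Fock space: `K_J |p⟩ = v^{n_J(p)} |p⟩`. -/
def Kop (a b : ℝ) : Fock →ₗ[K] Fock :=
  Finsupp.lsum K fun p =>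
    LinearMap.toSpanSingleton K Fock (Finsupp.single p (vK ^ (nJ p.1 a b)))

/-- The `K`-linear operator `K_J⁻¹` on the Fock space: `K_J⁻¹ |p⟩ = v^{−n_J(p)} |p⟩`. -/
def Kinvop (a b : ℝ) : Fock →ₗ[K] Fock :=
  Finsupp.lsum K fun p =>
    LinearMap.toSpanSingleton K Fock (Finsupp.single p (vK ^ (-nJ p.1 a b)))

open Set Filter Topology

theorem Filter.EventuallyEq.leftLim_eq {α β : Type*} [LinearOrder α] [TopologicalSpace α]
    [OrderTopology α] [TopologicalSpace β] [T2Space β] {f g : α → β} {x : α}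
    (h : f =ᶠ[𝓝 x] g) : leftLim f x = leftLim g x := by
  have hlt : f =ᶠ[𝓝[<] x] g := nhdsWithin_le_nhds h
  rcases eq_or_neBot (𝓝[<] x) with hbot | hne
  · rw [leftLim_eq_of_eq_bot f hbot, leftLim_eq_of_eq_bot g hbot, h.eq_of_nhds]
  by_cases hlim : ∃ y, Tendsto g (𝓝[<] x) (𝓝 y)
  · obtain ⟨y, hy⟩ := hlim
    rw [leftLim_eq_of_tendsto hy, leftLim_eq_of_tendsto ((tendsto_congr' hlt).2 hy)]
  · have hlim' : ¬∃ y, Tendsto f (𝓝[<] x) (𝓝 y) := by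
      simpa only [tendsto_congr' hlt] using hlim
    rw [leftLim_eq_of_not_tendsto f hlim', leftLim_eq_of_not_tendsto g hlim, h.eq_of_nhds]

theorem MonotoneOn.glue {α β : Type*} [LinearOrder α] [Preorder β] {f g h : α → β}
    {s : Set α} {c₁ c₂ : α} (hs : s.OrdConnected) (hc : c₁ < c₂) (hg : MonotoneOn g s)
    (hh : MonotoneOn h s) (hfg : EqOn f g (Iio c₂)) (hfh : EqOn f h (Ici c₁)) :
    MonotoneOn f s := by
  intro x hx y hy hxy
  rcases lt_or_ge y c₂ with hy₂ | hy₂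
  · rw [hfg (hxy.trans_lt hy₂), hfg hy₂]
    exact hg hx hy hxy
  rcases le_or_gt c₁ x with hx₁ | hx₁
  · rw [hfh hx₁, hfh (hx₁.trans hxy)]
    exact hh hx hy hxy
  have hc₁ : c₁ ∈ s := hs.out hx hy ⟨hx₁.le, hc.le.trans hy₂⟩
  calc f x = g x := hfg (hx₁.trans hc)
    _ ≤ g c₁ := hg hx hc₁ hx₁.le
    _ = h c₁ := (hfg hc).symm.trans (hfh le_rfl)
    _ ≤ h y := hh hc₁ hy (hc.le.trans hy₂)
    _ = f y := (hfh (hc.le.trans hy₂)).symm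

theorem AntitoneOn.glue {α β : Type*} [LinearOrder α] [Preorder β] {f g h : α → β}
    {s : Set α} {c₁ c₂ : α} (hs : s.OrdConnected) (hc : c₁ < c₂) (hg : AntitoneOn g s)
    (hh : AntitoneOn h s) (hfg : EqOn f g (Iio c₂)) (hfh : EqOn f h (Ici c₁)) :
    AntitoneOn f s :=
  MonotoneOn.glue (β := βᵒᵈ) hs hc hg hh hfg hfh

namespace IsRealPyramid

variable {p : ℝ → ℕ}

theorem monotoneOn (hp : IsRealPyramid p) : MonotoneOn p (Iic 0) :=
  fun _ _ _ hy hxy => hp.2.2.1 hxy hy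

theorem antitoneOn (hp : IsRealPyramid p) : AntitoneOn p (Ici 0) :=
  fun _ hx _ _ hxy => hp.2.2.2.1 hx hxy

/-- Near every point `f` coincides with `g` or with `h`, which settles the local conditions; the
shape conditions survive because `g` and `h` agree on the overlap `[c₁, c₂)`. -/
theorem glue {f g h : ℝ → ℕ} {c₁ c₂ : ℝ} (hg : IsRealPyramid g) (hh : IsRealPyramid h)
    (hc : c₁ < c₂) (hfg : EqOn f g (Iio c₂)) (hfh : EqOn f h (Ici c₁)) :
    IsRealPyramid f := by
  have hloc : ∀ x, f =ᶠ[𝓝 x] g ∨ f =ᶠ[𝓝 x] h := fun x =>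
    (lt_or_ge x c₂).imp (fun hx => eventually_of_mem (Iio_mem_nhds hx) hfg)
      fun hx => eventually_of_mem (Ioi_mem_nhds (hc.trans_le hx)) (hfh.mono Ioi_subset_Ici_self)
  have hmono : MonotoneOn f (Iic 0) :=
    MonotoneOn.glue ordConnected_Iic hc hg.monotoneOn hh.monotoneOn hfg hfh
  have hanti : AntitoneOn f (Ici 0) :=
    AntitoneOn.glue ordConnected_Ici hc hg.antitoneOn hh.antitoneOn hfg hfh
  obtain ⟨⟨Mg, hMg⟩, -, -, -, hgrc, hgfin, hgjump⟩ := hg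
  obtain ⟨⟨Mh, hMh⟩, -, -, -, hhrc, hhfin, hhjump⟩ := hh
  refine ⟨⟨max Mg Mh, fun x hx => ?_⟩, fun x => ?_, fun x y hxy hy => hmono (hxy.trans hy) hy hxy,
    fun x y hx hxy => hanti hx (hx.trans hxy) hxy, fun x => ?_, ?_, fun x => ?_⟩
  · rcases hloc x with e | e <;> rw [e.eq_of_nhds]
    exacts [hMg x (le_of_max_le_left hx), hMh x (le_of_max_le_right hx)]
  · rcases le_total x 0 with hx | hx
    exacts [hmono hx self_mem_Iic hx, hanti self_mem_Ici hx hx]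
  · rcases hloc x with e | e
    exacts [(hgrc x).congr_of_eventuallyEq (nhdsWithin_le_nhds e) e.eq_of_nhds,
      (hhrc x).congr_of_eventuallyEq (nhdsWithin_le_nhds e) e.eq_of_nhds]
  · refine (hgfin.union hhfin).subset fun x hx => (hloc x).imp ?_ ?_ <;>
      exact fun e hcont => hx ((continuousAt_congr e).2 hcont)
  · rcases hloc x with e | e <;> rw [e.eq_of_nhds, e.leftLim_eq]
    exacts [hgjump x, hhjump x]

end IsRealPyramid

theorem ind_eq_zero_of_notMem {a b x : ℝ} (h : x ∉ Ico a b) : ind a b x = 0 :=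
  indicator_of_notMem h _

theorem ind_eq_zero_of_mem_Icc {a₁ b₁ a₂ b₂ x : ℝ} (hsep : b₁ < a₂ ∨ b₂ < a₁)
    (hx : x ∈ Icc a₁ b₁) : ind a₂ b₂ x = 0 :=
  ind_eq_zero_of_notMem fun h => by rcases hsep with hs | hs <;> linarith [hx.1, hx.2, h.1, h.2]

theorem IsRealPyramid.of_eqOn_Ico {p q f : ℝ → ℕ} {a₁ b₁ a₂ b₂ : ℝ}
    (hsep : b₁ < a₂ ∨ b₂ < a₁) (hp : IsRealPyramid p) (hq : IsRealPyramid q)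
    (hpq : EqOn p q (Ico a₁ b₁ ∪ Ico a₂ b₂)ᶜ) (hfq : EqOn f q (Ico a₁ b₁))
    (hfp : EqOn f p (Ico a₁ b₁)ᶜ) : IsRealPyramid f := by
  have hfq' : ∀ x ∉ Ico a₂ b₂, f x = q x := fun x hx₂ => by
    by_cases hx₁ : x ∈ Ico a₁ b₁
    exacts [hfq hx₁, (hfp hx₁).trans (hpq fun h => h.elim hx₁ hx₂)]
  rcases hsep with hsep | hsep
  · exact hq.glue hp hsep (fun x hx => hfq' x fun h => (not_le.2 hx) h.1)
      fun x hx => hfp fun h => (not_lt.2 hx) h.2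
  · exact hp.glue hq hsep (fun x hx => hfp fun h => (not_le.2 hx) h.1)
      fun x hx => hfq' x fun h => (not_lt.2 hx) h.2

section Separated

variable {p : ℝ → ℕ} {a₁ b₁ a₂ b₂ : ℝ}

theorem Removable.swap (hsep : b₁ < a₂ ∨ b₂ < a₁) (hp : IsRealPyramid p)
    (h : Removable p a₂ b₂ ∧ Removable (fun x => p x - ind a₂ b₂ x) a₁ b₁) :
    Removable p a₁ b₁ ∧ Removable (fun x => p x - ind a₁ b₁ x) a₂ b₂ := by
  obtain ⟨⟨hle₂, -⟩, hle₁, hq⟩ := h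
  have h₂₁ : ∀ x ∈ Ico a₁ b₁, ind a₂ b₂ x = 0 := fun x hx =>
    ind_eq_zero_of_mem_Icc hsep (Ico_subset_Icc_self hx)
  have h₁₂ : ∀ x ∈ Ico a₂ b₂, ind a₁ b₁ x = 0 := fun x hx =>
    ind_eq_zero_of_mem_Icc hsep.symm (Ico_subset_Icc_self hx)
  have hp₁ : IsRealPyramid fun x => p x - ind a₁ b₁ x := by
    refine hp.of_eqOn_Ico hsep hq (fun x hx => ?_) (fun x hx => ?_) fun x hx => ?_
    · simp only [mem_compl_iff, mem_union, not_or] at hx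
      simp [ind_eq_zero_of_notMem hx.1, ind_eq_zero_of_notMem hx.2]
    · simp [h₂₁ x hx]
    · simp [ind_eq_zero_of_notMem hx]
  refine ⟨⟨fun x hx => (hle₁ x hx).trans (Nat.sub_le _ _), hp₁⟩, fun x hx => ?_, ?_⟩
  · simpa [h₁₂ x hx] using hle₂ x hx
  · simpa only [Nat.sub_right_comm] using hq

theorem Addable.swap (hsep : b₁ < a₂ ∨ b₂ < a₁) (hp : IsRealPyramid p)
    (h : Addable p a₂ b₂ ∧ Addable (fun x => p x + ind a₂ b₂ x) a₁ b₁) :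
    Addable p a₁ b₁ ∧ Addable (fun x => p x + ind a₁ b₁ x) a₂ b₂ := by
  have hq : IsRealPyramid fun x => p x + ind a₂ b₂ x + ind a₁ b₁ x := h.2
  refine ⟨hp.of_eqOn_Ico hsep hq (fun x hx => ?_) (fun x hx => ?_) fun x hx => ?_, ?_⟩
  · simp only [mem_compl_iff, mem_union, not_or] at hx
    simp [ind_eq_zero_of_notMem hx.1, ind_eq_zero_of_notMem hx.2]
  · simp [ind_eq_zero_of_mem_Icc hsep (Ico_subset_Icc_self hx)]
  · simp [ind_eq_zero_of_notMem hx]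
  · simpa only [Addable, Nat.add_right_comm] using hq

end Separated

theorem Eop_single (a b : ℝ) (p : Pyr) (c : K) :
    Eop a b (Finsupp.single p c) = c • Evec a b p := by
  simp only [Eop, Finsupp.lsum_single, LinearMap.toSpanSingleton_apply]

theorem Fop_single (a b : ℝ) (p : Pyr) (c : K) :
    Fop a b (Finsupp.single p c) = c • Fvec a b p := by
  simp only [Fop, Finsupp.lsum_single, LinearMap.toSpanSingleton_apply]

theorem Evec_of_removable {a b : ℝ} {p : Pyr} (h : Removable p.1 a b) :
    Evec a b p = Finsupp.single (⟨fun x => p.1 x - ind a b x, h.2⟩ : Pyr)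
      (-tK * (-vK) ^ ((p.1 b : ℤ) - p.1 a)) :=
  dif_pos h

theorem Fvec_of_addable {a b : ℝ} {p : Pyr} (h : Addable p.1 a b) :
    Fvec a b p = Finsupp.single (⟨fun x => p.1 x + ind a b x, h⟩ : Pyr)
      (tK * (-vK) ^ ((p.1 a : ℤ) - p.1 b)) :=
  dif_pos h

theorem Eop_Evec (a₁ b₁ a₂ b₂ : ℝ) (p : Pyr) :
    Eop a₁ b₁ (Evec a₂ b₂ p) =
      if h : Removable p.1 a₂ b₂ ∧ Removable (fun x => p.1 x - ind a₂ b₂ x) a₁ b₁ then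
        Finsupp.single ⟨fun x => p.1 x - ind a₂ b₂ x - ind a₁ b₁ x, h.2.2⟩
          (-tK * (-vK) ^ ((p.1 b₂ : ℤ) - p.1 a₂) *
            (-tK * (-vK) ^ (((p.1 b₁ - ind a₂ b₂ b₁ : ℕ) : ℤ) - (p.1 a₁ - ind a₂ b₂ a₁ : ℕ))))
      else 0 := by
  by_cases h₂ : Removable p.1 a₂ b₂
  · by_cases h₁ : Removable (fun x => p.1 x - ind a₂ b₂ x) a₁ b₁
    · rw [dif_pos ⟨h₂, h₁⟩, Evec_of_removable h₂]
      erw [Eop_single, Evec_of_removable h₁, Finsupp.smul_single,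
        smul_eq_mul]
      rfl
    · rw [dif_neg (h₁ ·.2), Evec_of_removable h₂]
      erw [Eop_single, Evec, dif_neg h₁, smul_zero]
  · rw [dif_neg (h₂ ·.1), Evec, dif_neg h₂, map_zero]

theorem Fop_Fvec (a₁ b₁ a₂ b₂ : ℝ) (p : Pyr) :
    Fop a₁ b₁ (Fvec a₂ b₂ p) =
      if h : Addable p.1 a₂ b₂ ∧ Addable (fun x => p.1 x + ind a₂ b₂ x) a₁ b₁ then
        Finsupp.single ⟨fun x => p.1 x + ind a₂ b₂ x + ind a₁ b₁ x, h.2⟩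
          (tK * (-vK) ^ ((p.1 a₂ : ℤ) - p.1 b₂) *
            (tK * (-vK) ^ (((p.1 a₁ + ind a₂ b₂ a₁ : ℕ) : ℤ) - (p.1 b₁ + ind a₂ b₂ b₁ : ℕ))))
      else 0 := by
  by_cases h₂ : Addable p.1 a₂ b₂
  · by_cases h₁ : Addable (fun x => p.1 x + ind a₂ b₂ x) a₁ b₁
    · rw [dif_pos ⟨h₂, h₁⟩, Fvec_of_addable h₂]
      erw [Fop_single, Fvec_of_addable h₁, Finsupp.smul_single,
        smul_eq_mul]
      rfl
    · rw [dif_neg (h₁ ·.2), Fvec_of_addable h₂]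
      erw [Fop_single, Fvec, dif_neg h₁, smul_zero]
  · rw [dif_neg (h₂ ·.1), Fvec, dif_neg h₂, map_zero]

section Separated

variable {a₁ b₁ a₂ b₂ : ℝ}

theorem Eop_Evec_comm (hsep : b₁ < a₂ ∨ b₂ < a₁) (h₁ : a₁ ≤ b₁) (h₂ : a₂ ≤ b₂) (p : Pyr) :
    Eop a₁ b₁ (Evec a₂ b₂ p) = Eop a₂ b₂ (Evec a₁ b₁ p) := by
  rw [Eop_Evec, Eop_Evec]
  by_cases h : Removable p.1 a₂ b₂ ∧ Removable (fun x => p.1 x - ind a₂ b₂ x) a₁ b₁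
  · rw [dif_pos h, dif_pos (Removable.swap hsep p.2 h)]
    congr 1
    · exact Subtype.ext (funext fun x => Nat.sub_right_comm _ _ _)
    · simp only [ind_eq_zero_of_mem_Icc hsep (left_mem_Icc.2 h₁),
        ind_eq_zero_of_mem_Icc hsep (right_mem_Icc.2 h₁),
        ind_eq_zero_of_mem_Icc hsep.symm (left_mem_Icc.2 h₂),
        ind_eq_zero_of_mem_Icc hsep.symm (right_mem_Icc.2 h₂), Nat.sub_zero]
      ring
  · rw [dif_neg h, dif_neg (mt (Removable.swap hsep.symm p.2) h)]

theorem Fop_Fvec_comm (hsep : b₁ < a₂ ∨ b₂ < a₁) (h₁ : a₁ ≤ b₁) (h₂ : a₂ ≤ b₂) (p : Pyr) :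
    Fop a₁ b₁ (Fvec a₂ b₂ p) = Fop a₂ b₂ (Fvec a₁ b₁ p) := by
  rw [Fop_Fvec, Fop_Fvec]
  by_cases h : Addable p.1 a₂ b₂ ∧ Addable (fun x => p.1 x + ind a₂ b₂ x) a₁ b₁
  · rw [dif_pos h, dif_pos (Addable.swap hsep p.2 h)]
    congr 1
    · exact Subtype.ext (funext fun x => Nat.add_right_comm _ _ _)
    · simp only [ind_eq_zero_of_mem_Icc hsep (left_mem_Icc.2 h₁),
        ind_eq_zero_of_mem_Icc hsep (right_mem_Icc.2 h₁),
        ind_eq_zero_of_mem_Icc hsep.symm (left_mem_Icc.2 h₂),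
        ind_eq_zero_of_mem_Icc hsep.symm (right_mem_Icc.2 h₂), Nat.add_zero]
      ring
  · rw [dif_neg h, dif_neg (mt (Addable.swap hsep.symm p.2) h)]

end Separated

/-- if the closures of `J₁ = [a₁,b₁)` and `J₂ = [a₂,b₂)` are disjoint, then
`E_{J₁}, E_{J₂}` commute and `F_{J₁}, F_{J₂}` commute on the Fock space. -/
theorem fock_nest_disjoint_commute (a₁ b₁ a₂ b₂ : ℝ) (h₁ : a₁ < b₁) (h₂ : a₂ < b₂)
    (hdisj : Set.Icc a₁ b₁ ∩ Set.Icc a₂ b₂ = ∅) :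
    Eop a₁ b₁ ∘ₗ Eop a₂ b₂ = Eop a₂ b₂ ∘ₗ Eop a₁ b₁ ∧
    Fop a₁ b₁ ∘ₗ Fop a₂ b₂ = Fop a₂ b₂ ∘ₗ Fop a₁ b₁ := by
  have hsep : b₁ < a₂ ∨ b₂ < a₁ := by
    rw [Icc_inter_Icc, Icc_eq_empty_iff, max_le_iff, le_min_iff, le_min_iff] at hdisj
    by_contra! h
    exact hdisj ⟨⟨h₁.le, h.2⟩, h.1, h₂.le⟩
  constructor <;> refine Finsupp.lhom_ext fun p c => ?_ <;>
    simp only [LinearMap.comp_apply, Eop_single, Fop_single, map_smul,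
      Eop_Evec_comm hsep h₁.le h₂.le, Fop_Fvec_comm hsep h₁.le h₂.le]
end
end

section
/- The Fock space 𝓕 is irreducible: every K-linear subspace of 𝓕 that is stable under the operators E_J and F_J for all real intervals J is either {0} or all of 𝓕. -/
/-!
`E_J F_J` maps `|p⟩` to itself if `J` is addable for `p` and to `0` otherwise, so an invariant
subspace `W` is stable under these diagonal projections. A pyramid is determined by its jumps
`p(x) - p₋(x)`, which are `0` or `1` on `(-∞, 0]` and `0` or `-1` on `(0, ∞)`, and an interval
reaching from outside the support up to (or from) a point `d` is addable exactly when `p` jumps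
at `d`. Hence the projections separate the basis vectors, and every nonzero vector of `W` yields a
basis vector `|p⟩ ∈ W`. Removing the top layer `{x | p x = p 0}` with some `E_J` repeatedly
leads to the empty pyramid, and adding layers with the `F_J` leads from it to every pyramid.
-/
noncomputable section
open Function
open scoped Classical

open Function Set Filter Topology

theorem Real.forall_ge_induction {P : ℝ → Prop} {x₀ : ℝ} (h₀ : P x₀)
    (hleft : ∀ z, x₀ < z → (∀ w ∈ Ico x₀ z, P w) → P z)
    (hright : ∀ z, x₀ ≤ z → P z → ∀ᶠ w in 𝓝[≥] z, P w) :
    ∀ z, x₀ ≤ z → P z := by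
  by_contra! hbad
  set T := {z | x₀ ≤ z ∧ ¬P z}
  have hT : T.Nonempty := hbad
  have hTbdd : BddBelow T := ⟨x₀, fun z hz => hz.1⟩
  have hx₀s : x₀ ≤ sInf T := le_csInf hT fun z hz => hz.1
  have hbelow : ∀ w ∈ Ico x₀ (sInf T), P w := fun w hw => by
    by_contra hPw
    exact (csInf_le hTbdd ⟨hw.1, hPw⟩).not_gt hw.2
  have hPs : P (sInf T) := by
    rcases hx₀s.eq_or_lt with heq | hlt
    · exact heq ▸ h₀
    · exact hleft _ hlt hbelow
  obtain ⟨u, hsu, hu⟩ := mem_nhdsGE_iff_exists_Ico_subset.1 (hright _ hx₀s hPs)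
  have : u ≤ sInf T := le_csInf hT fun z hz => by
    by_contra! hzu
    exact hz.2 (hu ⟨csInf_le hTbdd hz, hzu⟩)
  exact this.not_gt hsu

theorem le_of_jumps_nonneg {α : Type*} [Preorder α] {f l : ℝ → α} {x y : ℝ} (hxy : x ≤ y)
    (hleft : ∀ z, ∀ᶠ w in 𝓝[<] z, f w = l z) (hright : ∀ z, ∀ᶠ w in 𝓝[≥] z, f w = f z)
    (hjump : ∀ z ∈ Ioc x y, l z ≤ f z) : f x ≤ f y := by
  refine Real.forall_ge_induction (P := fun z => z ≤ y → f x ≤ f z) (fun _ => le_rfl) ?_ ?_ y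
    hxy le_rfl
  · intro z hxz hbelow hzy
    obtain ⟨w, hfw, hw⟩ := ((hleft z).and (Ioo_mem_nhdsLT hxz)).exists
    calc f x ≤ f w := hbelow w ⟨hw.1.le, hw.2⟩ (hw.2.le.trans hzy)
      _ = l z := hfw
      _ ≤ f z := hjump z ⟨hxz, hzy⟩
  · intro z _ hPz
    filter_upwards [hright z, self_mem_nhdsWithin] with w hfw hzw hwy
    exact hfw ▸ hPz (le_trans hzw hwy)

section DiscreteCodomain

variable {α β : Type*} [TopologicalSpace α] [TopologicalSpace β] [DiscreteTopology β]

theorem continuousWithinAt_iff_eventually_eq_of_discrete {f : α → β} {s : Set α} {x : α} :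
    ContinuousWithinAt f s x ↔ ∀ᶠ y in 𝓝[s] x, f y = f x := by
  rw [ContinuousWithinAt, nhds_discrete β, tendsto_pure]

theorem continuousAt_iff_eventually_eq_of_discrete {f : α → β} {x : α} :
    ContinuousAt f x ↔ ∀ᶠ y in 𝓝 x, f y = f x := by
  rw [ContinuousAt, nhds_discrete β, tendsto_pure]

theorem leftLim_eq_of_eventually_eq {f : ℝ → β} {x : ℝ} {c : β}
    (h : ∀ᶠ y in 𝓝[<] x, f y = c) : leftLim f x = c :=
  leftLim_eq_of_tendsto (by rwa [nhds_discrete β, tendsto_pure])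

end DiscreteCodomain

def IsStepFun (f : ℝ → ℕ) : Prop :=
  (∃ M : ℝ, ∀ x : ℝ, M ≤ |x| → f x = 0) ∧
  (∀ x, ContinuousWithinAt f (Ici x) x) ∧
  {x : ℝ | ¬ ContinuousAt f x}.Finite

def jump (f : ℝ → ℕ) (x : ℝ) : ℤ := (f x : ℤ) - (leftLim f x : ℕ)

namespace IsStepFun

variable {f g : ℝ → ℕ}

theorem eventually_right (hf : IsStepFun f) (x : ℝ) : ∀ᶠ y in 𝓝[≥] x, f y = f x :=
  continuousWithinAt_iff_eventually_eq_of_discrete.1 (hf.2.1 x)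

theorem eventually_left (hf : IsStepFun f) (x : ℝ) : ∀ᶠ y in 𝓝[<] x, f y = leftLim f x := by
  have hcont : ∀ᶠ y in 𝓝[<] x, ContinuousAt f y := by
    have hD : ({y | ¬ ContinuousAt f y} \ {x})ᶜ ∈ 𝓝 x :=
      (hf.2.2.subset sdiff_subset).isClosed.isOpen_compl.mem_nhds (by simp)
    filter_upwards [nhdsWithin_le_nhds hD, self_mem_nhdsWithin] with y hy hyx
    by_contra hdisc
    exact hy ⟨hdisc, (ne_of_lt hyx : y ≠ x)⟩
  obtain ⟨u, hux, hu⟩ := mem_nhdsLT_iff_exists_Ioo_subset.1 hcont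
  rw [mem_Iio] at hux
  have hconst : ∀ y ∈ Ioo u x, f y = f ((u + x) / 2) := fun y hy =>
    isPreconnected_Ioo.constant (fun z hz => (hu hz).continuousWithinAt) hy
      ⟨by linarith, by linarith⟩
  have hev : ∀ᶠ y in 𝓝[<] x, f y = f ((u + x) / 2) :=
    Filter.mem_of_superset (Ioo_mem_nhdsLT hux) hconst
  rwa [leftLim_eq_of_eventually_eq hev]

theorem map₂ (hf : IsStepFun f) (hg : IsStepFun g) (op : ℕ → ℕ → ℕ) (hop : op 0 0 = 0) :
    IsStepFun fun x => op (f x) (g x) := by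
  have hop_cont : Continuous fun n : ℕ × ℕ => op n.1 n.2 := continuous_of_discreteTopology
  obtain ⟨⟨Mf, hMf⟩, hfr, hfd⟩ := hf
  obtain ⟨⟨Mg, hMg⟩, hgr, hgd⟩ := hg
  refine ⟨⟨max Mf Mg, fun x hx => ?_⟩, fun x => ?_, (hfd.union hgd).subset fun x hx => ?_⟩
  · change op (f x) (g x) = 0
    rw [hMf x (le_of_max_le_left hx), hMg x (le_of_max_le_right hx), hop]
  · exact hop_cont.continuousAt.comp_continuousWithinAt ((hfr x).prodMk (hgr x))
  · by_contra hcont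
    simp only [mem_union, mem_ofPred_eq, not_or, not_not] at hcont
    exact hx (hop_cont.continuousAt.comp (hcont.1.prodMk hcont.2))

theorem leftLim_map₂ (hf : IsStepFun f) (hg : IsStepFun g) (op : ℕ → ℕ → ℕ) (x : ℝ) :
    leftLim (fun y => op (f y) (g y)) x = op (leftLim f x) (leftLim g x) :=
  leftLim_eq_of_eventually_eq <| by
    filter_upwards [hf.eventually_left x, hg.eventually_left x] with y hfy hgy
    rw [hfy, hgy]

theorem jump_add (hf : IsStepFun f) (hg : IsStepFun g) (x : ℝ) :
    jump (fun y => f y + g y) x = jump f x + jump g x := by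
  simp only [jump, leftLim_map₂ hf hg]
  push_cast
  ring

theorem leftLim_mono (hf : IsStepFun f) (hg : IsStepFun g) (hgf : ∀ x, g x ≤ f x) (x : ℝ) :
    leftLim g x ≤ leftLim f x := by
  obtain ⟨y, hfy, hgy⟩ := ((hf.eventually_left x).and (hg.eventually_left x)).exists
  exact hgy ▸ hfy ▸ hgf y

theorem jump_sub (hf : IsStepFun f) (hg : IsStepFun g) (hgf : ∀ x, g x ≤ f x) (x : ℝ) :
    jump (fun y => f y - g y) x = jump f x - jump g x := by
  simp only [jump, leftLim_map₂ hf hg (· - ·)]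
  rw [Nat.cast_sub (hgf x), Nat.cast_sub (leftLim_mono hf hg hgf x)]
  ring

theorem eq_of_jump_eq (hf : IsStepFun f) (hg : IsStepFun g) (h : ∀ x, jump f x = jump g x) :
    f = g := by
  obtain ⟨Mf, hMf⟩ := hf.1
  obtain ⟨Mg, hMg⟩ := hg.1
  set x₀ := -(|Mf| + |Mg|)
  have hfar : ∀ x ≤ x₀, f x = g x := fun x hx => by
    have := neg_le_abs x
    rw [hMf x (by linarith [le_abs_self Mf, abs_nonneg Mg]),
      hMg x (by linarith [le_abs_self Mg, abs_nonneg Mf])]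
  have hright : ∀ x, x₀ ≤ x → f x = g x := by
    refine Real.forall_ge_induction (hfar x₀ le_rfl) (fun z hz hbelow => ?_) fun z _ hfgz => ?_
    · obtain ⟨y, ⟨hfy, hgy⟩, hy⟩ :=
        (((hf.eventually_left z).and (hg.eventually_left z)).and (Ioo_mem_nhdsLT hz)).exists
      have hlim : leftLim f z = leftLim g z := by rw [← hfy, ← hgy, hbelow y ⟨hy.1.le, hy.2⟩]
      have := h z
      simp only [jump, hlim] at this
      omega
    · filter_upwards [hf.eventually_right z, hg.eventually_right z] with y hfy hgy
      rw [hfy, hgy, hfgz]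
  funext x
  exact (le_total x x₀).elim (hfar x) (hright x)

end IsStepFun

theorem jump_eq_zero_of_lt_abs {f : ℝ → ℕ} {M x : ℝ} (hM : ∀ x, M ≤ |x| → f x = 0)
    (hx : M < |x|) : jump f x = 0 := by
  have hzero : ∀ᶠ y in 𝓝 x, f y = 0 :=
    ((continuous_abs.tendsto x).eventually (lt_mem_nhds hx)).mono fun y hy => hM y hy.le
  simp [jump, leftLim_eq_of_eventually_eq (nhdsWithin_le_nhds hzero), hzero.self_of_nhds]

section Indicator

variable {a b x y : ℝ}

theorem ind_apply : ind a b x = if a ≤ x ∧ x < b then 1 else 0 := by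
  simp [ind, indicator_apply]

theorem ind_eq_one (h : x ∈ Ico a b) : ind a b x = 1 := indicator_of_mem h _

theorem ind_eq_zero_of_lt (h : x < a) : ind a b x = 0 :=
  indicator_of_notMem (fun hx => (hx.1.trans_lt h).false) _

theorem ind_eq_zero_of_le (h : b ≤ x) : ind a b x = 0 :=
  indicator_of_notMem (fun hx => (hx.2.trans_le h).false) _

theorem ind_le_of_forall_one_le {q : ℝ → ℕ} (h : ∀ x ∈ Ico a b, 1 ≤ q x) (x : ℝ) :
    ind a b x ≤ q x := by
  rw [ind_apply]
  split_ifs with hx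
  exacts [h x hx, Nat.zero_le _]

theorem isStepFun_ind (a b : ℝ) : IsStepFun (ind a b) := by
  refine ⟨⟨|a| + |b| + 1, fun x hx => indicator_of_notMem (fun hx' => ?_) _⟩, fun x => ?_, ?_⟩
  · cases abs_cases x <;>
      linarith [hx'.1, hx'.2, neg_abs_le a, le_abs_self b, abs_nonneg a, abs_nonneg b]
  · rw [continuousWithinAt_iff_eventually_eq_of_discrete]
    rcases lt_or_ge x a with hxa | hax
    · filter_upwards [nhdsWithin_le_nhds (Iio_mem_nhds hxa)] with y hy
      rw [ind_eq_zero_of_lt hy, ind_eq_zero_of_lt hxa]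
    rcases lt_or_ge x b with hxb | hbx
    · filter_upwards [Ico_mem_nhdsGE_of_mem ⟨hax, hxb⟩] with y hy
      rw [ind_eq_one hy, ind_eq_one ⟨hax, hxb⟩]
    · filter_upwards [self_mem_nhdsWithin] with y hy
      rw [ind_eq_zero_of_le (hbx.trans hy), ind_eq_zero_of_le hbx]
  · refine (toFinite {a, b}).subset fun x hx => ?_
    by_contra hab
    simp only [mem_insert_iff, mem_singleton_iff, not_or] at hab
    refine hx (continuousAt_iff_eventually_eq_of_discrete.2 ?_)
    rcases lt_or_gt_of_ne hab.1 with hxa | hax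
    · filter_upwards [Iio_mem_nhds hxa] with y hy
      rw [ind_eq_zero_of_lt hy, ind_eq_zero_of_lt hxa]
    rcases lt_or_gt_of_ne hab.2 with hxb | hbx
    · filter_upwards [Ioo_mem_nhds hax hxb] with y hy
      rw [ind_eq_one ⟨hy.1.le, hy.2⟩, ind_eq_one ⟨hax.le, hxb⟩]
    · filter_upwards [Ioi_mem_nhds hbx] with y hy
      rw [ind_eq_zero_of_le (le_of_lt hy), ind_eq_zero_of_le hbx.le]

theorem leftLim_ind : leftLim (ind a b) x = if a < x ∧ x ≤ b then 1 else 0 := by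
  apply leftLim_eq_of_eventually_eq
  split_ifs with h
  · filter_upwards [Ioo_mem_nhdsLT h.1] with y hy
    exact ind_eq_one ⟨hy.1.le, hy.2.trans_le h.2⟩
  rcases le_or_gt x a with hxa | hax
  · filter_upwards [self_mem_nhdsWithin] with y hy
    exact ind_eq_zero_of_lt (hy.trans_le hxa)
  · filter_upwards [Ioo_mem_nhdsLT (lt_of_not_ge fun hxb => h ⟨hax, hxb⟩)] with y hy
    exact ind_eq_zero_of_le hy.1.le

theorem jump_ind (hab : a < b) :
    jump (ind a b) x = if x = a then 1 else if x = b then -1 else 0 := by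
  rw [jump, leftLim_ind, ind_apply]
  by_cases hxa : x = a
  · simp [hxa, hab]
  by_cases hxb : x = b
  · simp [hxb, hab, hab.ne']
  have hsame : a ≤ x ∧ x < b ↔ a < x ∧ x ≤ b :=
    ⟨fun h => ⟨lt_of_le_of_ne h.1 (Ne.symm hxa), h.2.le⟩, fun h => ⟨h.1.le, lt_of_le_of_ne h.2 hxb⟩⟩
  simp only [hsame, hxa, hxb, if_false]
  split_ifs <;> simp

end Indicator

def IsPyramidJump (x : ℝ) (j : ℤ) : Prop := j = 0 ∨ j = if x ≤ 0 then 1 else -1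

theorem isRealPyramid_of_isPyramidJump {p : ℝ → ℕ} (hs : IsStepFun p)
    (hj : ∀ x, IsPyramidJump x (jump p x)) : IsRealPyramid p := by
  have hmono : ∀ ⦃x y : ℝ⦄, x ≤ y → y ≤ 0 → p x ≤ p y := fun x y hxy hy =>
    le_of_jumps_nonneg hxy hs.eventually_left hs.eventually_right fun z hz => by
      have := hj z
      rw [IsPyramidJump, if_pos (hz.2.trans hy)] at this
      unfold jump at this
      omega
  have hanti : ∀ ⦃x y : ℝ⦄, 0 ≤ x → x ≤ y → p y ≤ p x := fun x y hx hxy =>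
    le_of_jumps_nonneg (f := OrderDual.toDual ∘ p) (l := OrderDual.toDual ∘ leftLim p) hxy
      (fun z => (hs.eventually_left z).mono fun _ h => congrArg OrderDual.toDual h)
      (fun z => (hs.eventually_right z).mono fun _ h => congrArg OrderDual.toDual h) fun z hz => by
        have := hj z
        rw [IsPyramidJump, if_neg (not_le.2 (hx.trans_lt hz.1))] at this
        unfold jump at this
        change p z ≤ leftLim p z
        omega
  refine ⟨hs.1, fun x => ?_, hmono, hanti, hs.2.1, hs.2.2, fun x => ?_⟩
  · exact (le_total x 0).elim (fun hx => hmono hx le_rfl) fun hx => hanti le_rfl hx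
  · rcases hj x with h | h <;> rw [show _ - _ = jump p x from rfl, h]
    · simp
    · split_ifs <;> simp

namespace IsRealPyramid

variable {p q : ℝ → ℕ} {a b : ℝ}

theorem isStepFun (hp : IsRealPyramid p) : IsStepFun p := ⟨hp.1, hp.2.2.2.2.1, hp.2.2.2.2.2.1⟩

theorem isPyramidJump (hp : IsRealPyramid p) (x : ℝ) : IsPyramidJump x (jump p x) := by
  have hs := hp.isStepFun
  obtain ⟨-, -, hmono, hanti, -, -, hjump⟩ := hp
  have hj := abs_le.1 (hjump x)
  rw [IsPyramidJump]
  split_ifs with hx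
  · obtain ⟨y, hy, hyx⟩ := ((hs.eventually_left x).and self_mem_nhdsWithin).exists
    have := hmono (le_of_lt hyx) hx
    rw [hy] at this
    unfold jump
    omega
  · obtain ⟨y, hy, hyx⟩ :=
      ((hs.eventually_left x).and (Ioo_mem_nhdsLT (not_le.1 hx))).exists
    have := hanti hyx.1.le hyx.2.le
    rw [hy] at this
    unfold jump
    omega

theorem isRealPyramid_iff_of_jump_eq {f : ℝ → ℕ} (hp : IsRealPyramid p) (hf : IsStepFun f)
    (hfp : ∀ x, x ≠ a → x ≠ b → jump f x = jump p x) :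
    IsRealPyramid f ↔ IsPyramidJump a (jump f a) ∧ IsPyramidJump b (jump f b) := by
  refine ⟨fun h => ⟨h.isPyramidJump a, h.isPyramidJump b⟩,
    fun h => isRealPyramid_of_isPyramidJump hf fun x => ?_⟩
  by_cases hxa : x = a
  · exact hxa ▸ h.1
  by_cases hxb : x = b
  · exact hxb ▸ h.2
  exact hfp x hxa hxb ▸ hp.isPyramidJump x

theorem addable_iff (hp : IsRealPyramid p) (hab : a < b) :
    Addable p a b ↔ IsPyramidJump a (jump p a + 1) ∧ IsPyramidJump b (jump p b - 1) := by
  have hjump (x : ℝ) : jump (fun y => p y + ind a b y) x =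
      jump p x + if x = a then 1 else if x = b then -1 else 0 := by
    rw [hp.isStepFun.jump_add (isStepFun_ind a b), jump_ind hab]
  rw [Addable, hp.isRealPyramid_iff_of_jump_eq (a := a) (b := b)
    (hp.isStepFun.map₂ (isStepFun_ind a b) (· + ·) rfl) fun x hxa hxb => by simp [hjump, hxa, hxb],
    hjump, hjump]
  simp [hab.ne', sub_eq_add_neg]

theorem removable_iff (hp : IsRealPyramid p) (hab : a < b) :
    Removable p a b ↔ (∀ x ∈ Ico a b, 1 ≤ p x) ∧
      IsPyramidJump a (jump p a - 1) ∧ IsPyramidJump b (jump p b + 1) := by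
  refine and_congr_right fun hpos => ?_
  have hjump (x : ℝ) : jump (fun y => p y - ind a b y) x =
      jump p x - if x = a then 1 else if x = b then -1 else 0 := by
    rw [hp.isStepFun.jump_sub (isStepFun_ind a b) (ind_le_of_forall_one_le hpos), jump_ind hab]
  rw [hp.isRealPyramid_iff_of_jump_eq (a := a) (b := b)
    (hp.isStepFun.map₂ (isStepFun_ind a b) (· - ·) rfl) fun x hxa hxb => by simp [hjump, hxa, hxb],
    hjump, hjump]
  simp [hab.ne']


theorem addable_iff_jump_ne_zero_of_nonpos (hp : IsRealPyramid p) (hab : a < b) (hb : b ≤ 0)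
    (ha : jump p a = 0) : Addable p a b ↔ jump p b ≠ 0 := by
  have hjb := hp.isPyramidJump b
  simp only [addable_iff hp hab, ha, IsPyramidJump, if_pos hb, if_pos (hab.le.trans hb)] at hjb ⊢
  omega

theorem addable_iff_jump_ne_zero_of_pos (hp : IsRealPyramid p) (hab : a < b) (ha : 0 < a)
    (hb : jump p b = 0) : Addable p a b ↔ jump p a ≠ 0 := by
  have hja := hp.isPyramidJump a
  simp only [addable_iff hp hab, hb, IsPyramidJump, if_neg (not_le.2 ha),
    if_neg (not_le.2 (ha.trans hab))] at hja ⊢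
  omega

theorem exists_addable_ne (hp : IsRealPyramid p) (hq : IsRealPyramid q) (hne : p ≠ q) :
    ∃ a b, a < b ∧ ¬(Addable p a b ↔ Addable q a b) := by
  obtain ⟨d, hd⟩ : ∃ d, jump p d ≠ jump q d := by
    by_contra! h
    exact hne (hp.isStepFun.eq_of_jump_eq hq.isStepFun h)
  obtain ⟨Mp, hMp⟩ := hp.1
  obtain ⟨Mq, hMq⟩ := hq.1
  set R := |Mp| + |Mq| + |d| + 1
  have hR : 0 < R := by positivity
  have hfar : ∀ x, R ≤ |x| → jump p x = 0 ∧ jump q x = 0 := fun x hx =>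
    ⟨jump_eq_zero_of_lt_abs hMp (by linarith [le_abs_self Mp, abs_nonneg Mq, abs_nonneg d]),
      jump_eq_zero_of_lt_abs hMq (by linarith [le_abs_self Mq, abs_nonneg Mp, abs_nonneg d])⟩
  have hjp := hp.isPyramidJump d
  have hjq := hq.isPyramidJump d
  by_cases hd0 : d ≤ 0
  · have hRd : -R < d := by linarith [neg_abs_le d, abs_nonneg Mp, abs_nonneg Mq]
    obtain ⟨hpR, hqR⟩ := hfar (-R) (by rw [abs_neg, abs_of_pos hR])
    refine ⟨-R, d, hRd, ?_⟩
    rw [addable_iff_jump_ne_zero_of_nonpos hp hRd hd0 hpR,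
      addable_iff_jump_ne_zero_of_nonpos hq hRd hd0 hqR]
    simp only [IsPyramidJump, if_pos hd0] at hjp hjq
    omega
  · rw [not_le] at hd0
    have hdR : d < R := by linarith [le_abs_self d, abs_nonneg Mp, abs_nonneg Mq]
    obtain ⟨hpR, hqR⟩ := hfar R (by rw [abs_of_pos hR])
    refine ⟨d, R, hdR, ?_⟩
    rw [addable_iff_jump_ne_zero_of_pos hp hdR hd0 hpR,
      addable_iff_jump_ne_zero_of_pos hq hdR hd0 hqR]
    simp only [IsPyramidJump, if_neg (not_le.2 hd0)] at hjp hjq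
    omega

theorem exists_top_level_eq_Ico (hp : IsRealPyramid p) (h0 : 0 < p 0) :
    ∃ a b, a ≤ 0 ∧ 0 < b ∧ ∀ x, p x = p 0 ↔ x ∈ Ico a b := by
  have hright (x : ℝ) : ∃ u, x < u ∧ ∀ y ∈ Ico x u, p y = p x :=
    mem_nhdsGE_iff_exists_Ico_subset.1 (hp.isStepFun.eventually_right x)
  obtain ⟨⟨M, hM⟩, hmax, hmono, hanti, -⟩ := hp
  set S := {x | p x = p 0}
  have h0S : (0 : ℝ) ∈ S := rfl
  have hbdd : ∀ x ∈ S, |x| < M := fun x hx => by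
    by_contra! hMx
    have : p x = 0 := hM x hMx
    simp_all [S]
  have hbelow : BddBelow S := ⟨-M, fun x hx => by linarith [neg_abs_le x, hbdd x hx]⟩
  have habove : BddAbove S := ⟨M, fun x hx => by linarith [le_abs_self x, hbdd x hx]⟩
  have hconv : ∀ ⦃x y z⦄, x ≤ y → y ≤ z → x ∈ S → z ∈ S → y ∈ S := fun x y z hxy hyz hx hz =>
    le_antisymm (hmax y) <| (le_total y 0).elim (fun hy => hx ▸ hmono hxy hy)
      fun hy => hz ▸ hanti hy hyz
  have hinf : sInf S ∈ S := by
    obtain ⟨u, hu, hpu⟩ := hright (sInf S)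
    obtain ⟨s, hs, hsu⟩ := exists_lt_of_csInf_lt ⟨0, h0S⟩ hu
    exact (hpu s ⟨csInf_le hbelow hs, hsu⟩).symm.trans hs
  have hsup : sSup S ∉ S := fun hS => by
    obtain ⟨u, hu, hpu⟩ := hright (sSup S)
    have hmid : (sSup S + u) / 2 ∈ S := (hpu _ ⟨by linarith, by linarith⟩).trans hS
    linarith [le_csSup habove hmid]
  refine ⟨sInf S, sSup S, csInf_le hbelow h0S,
    (le_csSup habove h0S).lt_of_ne fun h => hsup (h ▸ h0S), fun x => ⟨fun hx => ?_, fun hx => ?_⟩⟩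
  · exact ⟨csInf_le hbelow hx, (le_csSup habove hx).lt_of_ne fun h => hsup (h ▸ hx)⟩
  · obtain ⟨s, hs, hxs⟩ := exists_lt_of_lt_csSup ⟨0, h0S⟩ hx.2
    exact hconv hx.1 hxs.le hinf hs

theorem exists_removable (hp : IsRealPyramid p) (h0 : 0 < p 0) :
    ∃ a b, a ≤ 0 ∧ 0 < b ∧ Removable p a b := by
  obtain ⟨a, b, ha, hb, htop⟩ := hp.exists_top_level_eq_Ico h0
  have hab : a < b := ha.trans_lt hb
  have hja : jump p a = 1 := by
    obtain ⟨y, hy, hya⟩ := ((hp.isStepFun.eventually_left a).and self_mem_nhdsWithin).exists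
    have hpy : p y ≠ p 0 := fun h => ((htop y).1 h).1.not_gt hya
    have hpa : p a = p 0 := (htop a).2 ⟨le_rfl, hab⟩
    have := hp.2.1 y
    have hj := hp.isPyramidJump a
    simp only [IsPyramidJump, if_pos ha, jump, ← hy] at hj ⊢
    omega
  have hjb : jump p b = -1 := by
    obtain ⟨y, hy, hyb⟩ := ((hp.isStepFun.eventually_left b).and (Ioo_mem_nhdsLT hab)).exists
    have hpy : p y = p 0 := (htop y).2 ⟨hyb.1.le, hyb.2⟩
    have hpb : p b ≠ p 0 := fun h => ((htop b).1 h).2.false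
    have := hp.2.1 b
    have hj := hp.isPyramidJump b
    simp only [IsPyramidJump, if_neg (not_le.2 hb), jump, ← hy] at hj ⊢
    omega
  refine ⟨a, b, ha, hb, (hp.removable_iff hab).2 ⟨fun x hx => ?_, ?_, ?_⟩⟩
  · rw [(htop x).2 hx]
    exact h0
  · simp [IsPyramidJump, hja]
  · simp [IsPyramidJump, hjb]

end IsRealPyramid

theorem Submodule.single_mem_iff_single_one_mem {ι F : Type*} [Field F]
    {W : Submodule F (ι →₀ F)} {i : ι} {c : F} (hc : c ≠ 0) :
    Finsupp.single i c ∈ W ↔ Finsupp.single i 1 ∈ W := by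
  rw [← Finsupp.smul_single_one, W.smul_mem_iff hc]

theorem Submodule.single_mem_of_filter_mem {ι F : Type*} [Field F] {Ps : Set (ι → Prop)}
    (hsep : ∀ i j, i ≠ j → ∃ P ∈ Ps, ¬(P i ↔ P j)) {W : Submodule F (ι →₀ F)}
    (hW : ∀ P ∈ Ps, ∀ y ∈ W, y.filter P ∈ W) {y : ι →₀ F} (hy : y ∈ W) {i : ι} (hi : y i ≠ 0) :
    Finsupp.single i 1 ∈ W := by
  induction hn : y.support.card using Nat.strong_induction_on generalizing y with
  | _ n ih =>
  by_cases hsub : y.support ⊆ {i}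
  · rw [Finsupp.support_subset_singleton.1 hsub] at hy
    exact (W.single_mem_iff_single_one_mem hi).1 hy
  obtain ⟨j, hj, hji⟩ := Finset.not_subset.1 hsub
  obtain ⟨P, hP, hPij⟩ := hsep i j (Ne.symm (Finset.notMem_singleton.1 hji))
  have hshrink (Q : ι → Prop) (hQ : y.filter Q ∈ W) (hQi : Q i) (hQj : ¬Q j) :
      Finsupp.single i 1 ∈ W := by
    refine ih _ ?_ hQ (by rwa [Finsupp.filter_apply_pos _ _ hQi]) rfl
    rw [← hn, Finsupp.support_filter]
    exact Finset.card_lt_card (Finset.filter_ssubset.2 ⟨j, hj, hQj⟩)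
  by_cases hPi : P i
  · exact hshrink P (hW P hP y hy) hPi fun hPj => hPij (iff_of_true hPi hPj)
  · refine hshrink (¬P ·) ?_ hPi fun hPj => hPij (iff_of_false hPi hPj)
    convert W.sub_mem hy (hW P hP y hy) using 1
    ext k
    by_cases hPk : P k <;> simp [hPk]

theorem tK_ne_zero : tK ≠ 0 := RatFunc.X_ne_zero

theorem neg_vK_ne_zero : -vK ≠ 0 := neg_ne_zero.2 (pow_ne_zero 2 tK_ne_zero)

theorem Ecoeff_ne_zero (m : ℤ) : -tK * (-vK) ^ m ≠ 0 :=
  mul_ne_zero (neg_ne_zero.2 tK_ne_zero) (zpow_ne_zero m neg_vK_ne_zero)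

theorem Fcoeff_ne_zero (m : ℤ) : tK * (-vK) ^ m ≠ 0 :=
  mul_ne_zero tK_ne_zero (zpow_ne_zero m neg_vK_ne_zero)

theorem Fcoeff_mul_Ecoeff (m : ℤ) : tK * (-vK) ^ m * (-tK * (-vK) ^ (-m - 1)) = 1 := by
  have hpow : (-vK) ^ m * (-vK) ^ (-m - 1) = (-vK)⁻¹ := by
    rw [← zpow_add₀ neg_vK_ne_zero, show m + (-m - 1) = -1 by ring, zpow_neg_one]
  calc tK * (-vK) ^ m * (-tK * (-vK) ^ (-m - 1))
      = -vK * ((-vK) ^ m * (-vK) ^ (-m - 1)) := by rw [vK]; ring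
    _ = 1 := by rw [hpow, mul_inv_cancel₀ neg_vK_ne_zero]

section Operators

variable {a b : ℝ} {p : Pyr}

theorem Eop_single_of_removable (h : Removable p.1 a b) (c : K) :
    Eop a b (Finsupp.single p c) = Finsupp.single ⟨fun x => p.1 x - ind a b x, h.2⟩
      (c * (-tK * (-vK) ^ ((p.1 b : ℤ) - (p.1 a : ℤ)))) := by
  simp only [Eop, Finsupp.lsum_single, LinearMap.toSpanSingleton_apply, Evec, dif_pos h]
  exact Finsupp.smul_single' _ _ _

theorem Fop_single_of_addable (h : Addable p.1 a b) (c : K) :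
    Fop a b (Finsupp.single p c) = Finsupp.single ⟨fun x => p.1 x + ind a b x, h⟩
      (c * (tK * (-vK) ^ ((p.1 a : ℤ) - (p.1 b : ℤ)))) := by
  simp only [Fop, Finsupp.lsum_single, LinearMap.toSpanSingleton_apply, Fvec, dif_pos h]
  exact Finsupp.smul_single' _ _ _

theorem Fop_single_of_not_addable (h : ¬Addable p.1 a b) (c : K) :
    Fop a b (Finsupp.single p c) = 0 := by
  simp [Fop, Fvec, h]

theorem IsRealPyramid.removable_add_ind {q : ℝ → ℕ} (hq : IsRealPyramid q) :
    Removable (fun x => q x + ind a b x) a b :=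
  ⟨fun x hx => by simp [ind_apply, hx.1, hx.2], by simpa using hq⟩

theorem Eop_Fop_single (hab : a < b) (c : K) :
    Eop a b (Fop a b (Finsupp.single p c)) =
      if Addable p.1 a b then Finsupp.single p c else 0 := by
  split_ifs with h
  · rw [Fop_single_of_addable h, Eop_single_of_removable (p := ⟨_, h⟩) p.2.removable_add_ind]
    congr 1
    · exact Subtype.ext (funext fun x => Nat.add_sub_cancel (p.1 x) (ind a b x))
    · have hexp : ((p.1 b + ind a b b : ℕ) : ℤ) - ((p.1 a + ind a b a : ℕ) : ℤ) =
          -((p.1 a : ℤ) - p.1 b) - 1 := by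
        simp only [ind_apply, le_refl, lt_self_iff_false, hab, and_self, and_false, if_true,
          if_false, add_zero, Nat.cast_add, Nat.cast_one]
        ring
      rw [hexp, mul_assoc, Fcoeff_mul_Ecoeff, mul_one]
  · rw [Fop_single_of_not_addable h, map_zero]

theorem Eop_Fop_eq_filter (hab : a < b) (y : Fock) :
    Eop a b (Fop a b y) = y.filter fun r => Addable r.1 a b := by
  induction y using Finsupp.induction_linear with
  | zero => simp [Finsupp.filter_zero]
  | add f g hf hg => rw [map_add, map_add, hf, hg, Finsupp.filter_add]
  | single r c =>
    rw [Eop_Fop_single hab]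
    split_ifs with h
    · exact (Finsupp.filter_single_of_pos (fun r : Pyr => Addable r.1 a b) h).symm
    · exact (Finsupp.filter_single_of_neg (fun r : Pyr => Addable r.1 a b) h).symm

end Operators

theorem isRealPyramid_zero : IsRealPyramid fun _ => 0 :=
  isRealPyramid_of_isPyramidJump ⟨⟨0, fun _ _ => rfl⟩, fun _ => continuousWithinAt_const,
    by simp [continuousAt_const]⟩ fun x => Or.inl <| by
      simp [jump, leftLim_eq_of_eventually_eq (Eventually.of_forall fun _ => rfl)]

def vacuum : Pyr := ⟨fun _ => 0, isRealPyramid_zero⟩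

theorem eq_vacuum_of_apply_zero_eq_zero {p : Pyr} (h : p.1 0 = 0) : p = vacuum :=
  Subtype.ext (funext fun x => Nat.le_zero.1 (h ▸ p.2.2.1 x))

section Reachability

variable {W : Submodule K Fock}

theorem single_vacuum_mem (hE : ∀ a b : ℝ, a < b → ∀ x ∈ W, Eop a b x ∈ W) (p : Pyr)
    (hp : Finsupp.single p 1 ∈ W) : Finsupp.single vacuum 1 ∈ W := by
  induction hn : p.1 0 generalizing p with
  | zero => rwa [← eq_vacuum_of_apply_zero_eq_zero hn]
  | succ n ih =>
    obtain ⟨a, b, ha, hb, hrem⟩ := p.2.exists_removable (by omega)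
    have hmem := hE a b (ha.trans_lt hb) _ hp
    rw [Eop_single_of_removable hrem, one_mul] at hmem
    exact ih _ ((W.single_mem_iff_single_one_mem (Ecoeff_ne_zero _)).1 hmem)
      (by simp [ind_apply, ha, hb, hn])

theorem single_mem_of_single_vacuum_mem (hF : ∀ a b : ℝ, a < b → ∀ x ∈ W, Fop a b x ∈ W)
    (hvac : Finsupp.single vacuum 1 ∈ W) (p : Pyr) : Finsupp.single p 1 ∈ W := by
  induction hn : p.1 0 generalizing p with
  | zero => rwa [eq_vacuum_of_apply_zero_eq_zero hn]
  | succ n ih =>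
    obtain ⟨a, b, ha, hb, hrem⟩ := p.2.exists_removable (by omega)
    set p' : Pyr := ⟨fun x => p.1 x - ind a b x, hrem.2⟩
    have hsub_add : ∀ x, p.1 x - ind a b x + ind a b x = p.1 x :=
      fun x => Nat.sub_add_cancel (ind_le_of_forall_one_le hrem.1 x)
    have hadd : Addable p'.1 a b := by
      change IsRealPyramid fun x => p.1 x - ind a b x + ind a b x
      simpa only [hsub_add] using p.2
    have hmem := hF a b (ha.trans_lt hb) _ (ih p' (by simp [p', ind_apply, ha, hb, hn]))
    rw [Fop_single_of_addable hadd, one_mul] at hmem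
    convert (W.single_mem_iff_single_one_mem (Fcoeff_ne_zero _)).1 hmem
    exact congrArg (Finsupp.single · 1) (Subtype.ext (funext fun x => (hsub_add x).symm))

end Reachability

/-- the Fock space is irreducible: every `K`-linear subspace stable under
all the operators `E_J` and `F_J` is `{0}` or the whole Fock space. -/
theorem fock_irreducible (W : Submodule K Fock)
    (hE : ∀ a b : ℝ, a < b → ∀ x ∈ W, Eop a b x ∈ W)
    (hF : ∀ a b : ℝ, a < b → ∀ x ∈ W, Fop a b x ∈ W) :
    W = ⊥ ∨ W = ⊤ := by
  refine or_iff_not_imp_left.2 fun hW => ?_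
  obtain ⟨y, hyW, hy0⟩ := (Submodule.ne_bot_iff W).1 hW
  obtain ⟨p, hp⟩ : ∃ p, y p ≠ 0 := by
    by_contra! h
    exact hy0 (Finsupp.ext h)
  have hsingle : Finsupp.single p 1 ∈ W := by
    refine Submodule.single_mem_of_filter_mem
      (Ps := {P | ∃ a b, a < b ∧ P = fun r : Pyr => Addable r.1 a b}) (fun q r hqr => ?_) ?_ hyW hp
    · obtain ⟨a, b, hab, h⟩ := q.2.exists_addable_ne r.2 fun h => hqr (Subtype.ext h)
      exact ⟨_, ⟨a, b, hab, rfl⟩, h⟩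
    · rintro _ ⟨a, b, hab, rfl⟩ x hx
      exact Eop_Fop_eq_filter hab x ▸ hE a b hab _ (hF a b hab x hx)
  have hbasis := single_mem_of_single_vacuum_mem hF (single_vacuum_mem hE p hsingle)
  rw [eq_top_iff, ← Finsupp.basisSingleOne.span_eq, Submodule.span_le]
  rintro _ ⟨q, rfl⟩
  simpa using hbasis q
end
end
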